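/- arXiv:2503.16189 — 2 statements merged into one kernel-verified Lean document; each statement's English description precedes it below -/
import Mathlib

section
/- For any ω ∈ L¹(ℝ²) and λ > 0, the function λ ∇^⊥(-Δ)^{-1}(λ-Δ)^{-1} ω satisfies ‖λ ∇^⊥(-Δ)^{-1}(λ-Δ)^{-1} ω‖_{L^∞(ℝ²)} ≲ λ^{1/2} ‖ω‖_{L¹(ℝ²)}, with constant independent of λ and ω. -/
open MeasureTheory
open scoped FourierTransform

noncomputable section

/-- `ξ^⊥ = (-ξ₂, ξ₁)`, viewed as a vector in `ℂ²`. -/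
def perpC (ξ : EuclideanSpace ℝ (Fin 2)) : EuclideanSpace ℂ (Fin 2) :=
  (WithLp.equiv 2 (Fin 2 → ℂ)).symm ![(-(ξ 1) : ℂ), ((ξ 0) : ℂ)]

/-- The symbol `λ ξ^⊥/(|ξ|²(λ+|ξ|²))` of the operator `λ ∇^⊥(-Δ)^{-1}(λ-Δ)^{-1}`. -/
def symbPerp (lam : ℝ) (ξ : EuclideanSpace ℝ (Fin 2)) : EuclideanSpace ℂ (Fin 2) :=
  ((lam / (‖ξ‖ ^ 2 * (lam + ‖ξ‖ ^ 2)) : ℝ) : ℂ) • perpC ξ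

/-!
The kernel `K_λ = 𝓕⁻¹(symbPerp λ)` is bounded pointwise by the `L¹` norm of its symbol, and
`|symbPerp λ ξ| = λ / (|ξ| (λ + |ξ|²))`. In polar coordinates the `1/|ξ|` singularity is cancelled
by the Jacobian, leaving `2π ∫₀^∞ λ / (λ + r²) dr = π² √λ`; convolving with `ω ∈ L¹` costs at most
`‖ω‖_{L¹}`.
-/

open Real Set

lemma norm_perpC (ξ : EuclideanSpace ℝ (Fin 2)) : ‖perpC ξ‖ = ‖ξ‖ := by
  rw [EuclideanSpace.norm_eq, EuclideanSpace.norm_eq]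
  congr 1
  simp [perpC, Fin.sum_univ_two, add_comm]

lemma norm_symbPerp {lam : ℝ} (hlam : 0 ≤ lam) (ξ : EuclideanSpace ℝ (Fin 2)) :
    ‖symbPerp lam ξ‖ = lam / (‖ξ‖ * (lam + ‖ξ‖ ^ 2)) := by
  rw [symbPerp, norm_smul, norm_perpC, Complex.norm_real, Real.norm_eq_abs,
    abs_of_nonneg (by positivity)]
  rcases eq_or_ne ‖ξ‖ 0 with hξ | hξ
  · simp [hξ]
  · field_simp

lemma integral_Ioi_div_add_sq {a : ℝ} (ha : 0 < a) :
    ∫ r in Ioi (0 : ℝ), a / (a + r ^ 2) = π / 2 * √a := by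
  have hs : 0 < √a := sqrt_pos.2 ha
  -- substitute `r = √a t`
  have hsubst : ∀ t : ℝ, a / (a + (√a * t) ^ 2) = (1 + t ^ 2)⁻¹ := fun t => by
    rw [mul_pow, sq_sqrt ha.le]
    field_simp
  have := integral_comp_mul_left_Ioi (fun r => a / (a + r ^ 2)) 0 hs
  simp only [hsubst, integral_Ioi_inv_one_add_sq, arctan_zero, sub_zero, mul_zero,
    smul_eq_mul] at this
  rw [this]
  field_simp

lemma integral_norm_symbPerp {lam : ℝ} (hlam : 0 < lam) :
    ∫ ξ, ‖symbPerp lam ξ‖ = π ^ 2 * √lam := by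
  have hradial : (fun ξ => ‖symbPerp lam ξ‖) = fun ξ => lam / (‖ξ‖ * (lam + ‖ξ‖ ^ 2)) :=
    funext (norm_symbPerp hlam.le)
  have hjacobian : ∫ r in Ioi (0 : ℝ), r ^ 1 • (lam / (r * (lam + r ^ 2))) =
      ∫ r in Ioi (0 : ℝ), lam / (lam + r ^ 2) := by
    refine setIntegral_congr_fun measurableSet_Ioi fun r (hr : 0 < r) => ?_
    simp only [pow_one, smul_eq_mul]
    field_simp
  rw [hradial, integral_fun_norm_addHaar volume (fun r => lam / (r * (lam + r ^ 2))),
    finrank_euclideanSpace_fin, hjacobian, integral_Ioi_div_add_sq hlam, measureReal_def,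
    EuclideanSpace.volume_ball_fin_two]
  simp only [ENNReal.ofReal_one, one_pow, one_mul, ENNReal.toReal_ofReal pi_pos.le, smul_eq_mul,
    nsmul_eq_mul, Nat.cast_ofNat]
  ring

lemma norm_fourierInv_le_integral_norm {V E : Type*} [NormedAddCommGroup V]
    [InnerProductSpace ℝ V] [MeasurableSpace V] [BorelSpace V] [FiniteDimensional ℝ V]
    [NormedAddCommGroup E] [NormedSpace ℂ E] (f : V → E) (x : V) :
    ‖𝓕⁻ f x‖ ≤ ∫ ξ, ‖f ξ‖ :=
  VectorFourier.norm_fourierIntegral_le_integral_norm _ _ _ _ _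

lemma norm_integral_smul_le_of_norm_le {α E : Type*} [MeasurableSpace α] {μ : Measure α}
    [NormedAddCommGroup E] [NormedSpace ℝ E] {ω : α → ℝ} (hω : Integrable ω μ) {g : α → E}
    {M : ℝ} (hg : ∀ y, ‖g y‖ ≤ M) :
    ‖∫ y, ω y • g y ∂μ‖ ≤ M * ∫ y, |ω y| ∂μ := by
  rw [← integral_const_mul]
  refine norm_integral_le_of_norm_le (hω.abs.const_mul M) (ae_of_all _ fun y => ?_)
  rw [norm_smul, Real.norm_eq_abs, mul_comm]
  exact mul_le_mul_of_nonneg_right (hg y) (abs_nonneg _)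

/-- For any `ω ∈ L¹(ℝ²)` and `λ > 0`, the function `λ ∇^⊥(-Δ)^{-1}(λ-Δ)^{-1} ω`,
realized as the convolution of `ω` with the kernel `K_λ = 𝓕⁻¹(symbPerp λ)`, satisfies
`‖λ ∇^⊥(-Δ)^{-1}(λ-Δ)^{-1} ω‖_{L^∞} ≲ λ^{1/2} ‖ω‖_{L¹}`, with a constant independent
of `λ` and `ω`. -/
theorem conv_kernel_Linfty_bound :
    ∃ C : ℝ, 0 < C ∧ ∀ lam : ℝ, 0 < lam →
      ∀ ω : EuclideanSpace ℝ (Fin 2) → ℝ, Integrable ω →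
        ∀ x : EuclideanSpace ℝ (Fin 2),
          ‖∫ y, ω y • (𝓕⁻ (symbPerp lam)) (x - y)‖ ≤
            C * Real.sqrt lam * ∫ y, |ω y| := by
  refine ⟨π ^ 2, by positivity, fun lam hlam ω hω x => ?_⟩
  have hkernel : ∀ z, ‖𝓕⁻ (symbPerp lam) z‖ ≤ π ^ 2 * √lam := fun z =>
    (norm_fourierInv_le_integral_norm _ z).trans_eq (integral_norm_symbPerp hlam)
  exact norm_integral_smul_le_of_norm_le hω fun y => hkernel (x - y)
end
end

section
/- For all r > 0, the derivative of r ↦ K₀(r) + log r is strictly positive, i.e. K₀'(r) + 1/r > 0. -/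
/-!
Bounding `√(s² + 2s) ≤ s + 1` in the integral representation gives
`∫₀^∞ e^{-rs} √(s² + 2s) ds ≤ 1/r² + 1/r`, hence `K₀'(r) ≥ -e^{-r}(1 + r)/r`,
and `e^{-r}(1 + r) < 1` because `1 + r < e^r`.
-/

open Real Set MeasureTheory
open scoped Nat

theorem integral_pow_mul_exp_neg_mul_Ioi (k : ℕ) {c : ℝ} (hc : 0 < c) :
    ∫ x in Ioi (0 : ℝ), x ^ k * exp (-(c * x)) = k ! / c ^ (k + 1) := by
  have key := integral_rpow_mul_exp_neg_mul_Ioi (by positivity : (0 : ℝ) < k + 1) hc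
  simp_rw [add_sub_cancel_right, rpow_natCast, Gamma_nat_eq_factorial, div_eq_mul_inv, one_mul,
    mul_comm, inv_rpow hc.le, ← rpow_natCast] at key ⊢
  exact_mod_cast key

theorem integrableOn_pow_mul_exp_neg_mul_Ioi (k : ℕ) {c : ℝ} (hc : 0 < c) :
    IntegrableOn (fun x ↦ x ^ k * exp (-(c * x))) (Ioi 0) :=
  .of_integral_ne_zero (by rw [integral_pow_mul_exp_neg_mul_Ioi k hc]; positivity)

theorem sqrt_sq_add_two_mul_le {s : ℝ} (hs : -1 ≤ s) : √(s ^ 2 + 2 * s) ≤ s + 1 :=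
  sqrt_le_iff.mpr ⟨by linarith, by nlinarith⟩

theorem setIntegral_exp_neg_mul_mul_sqrt_le {r : ℝ} (hr : 0 < r) :
    ∫ s in Ioi (0 : ℝ), exp (-r * s) * √(s ^ 2 + 2 * s) ≤ 1 / r ^ 2 + 1 / r := by
  have h₁ := integrableOn_pow_mul_exp_neg_mul_Ioi 1 hr
  have h₀ := integrableOn_pow_mul_exp_neg_mul_Ioi 0 hr
  calc ∫ s in Ioi (0 : ℝ), exp (-r * s) * √(s ^ 2 + 2 * s)
      ≤ ∫ s in Ioi (0 : ℝ), (s ^ 1 * exp (-(r * s)) + s ^ 0 * exp (-(r * s))) := by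
        refine integral_mono_of_nonneg (.of_forall fun s ↦ by positivity) (h₁.add h₀) ?_
        filter_upwards [ae_restrict_mem measurableSet_Ioi] with s (hs : 0 < s)
        rw [neg_mul, ← add_mul, mul_comm, pow_one, pow_zero]
        gcongr
        exact sqrt_sq_add_two_mul_le (by linarith)
    _ = 1 / r ^ 2 + 1 / r := by
        rw [integral_add h₁ h₀, integral_pow_mul_exp_neg_mul_Ioi 1 hr,
          integral_pow_mul_exp_neg_mul_Ioi 0 hr]
        norm_num

theorem exp_neg_mul_one_add_lt_one {r : ℝ} (hr : r ≠ 0) : exp (-r) * (1 + r) < 1 := by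
  calc exp (-r) * (1 + r) < exp (-r) * exp r := by
        gcongr; linarith [add_one_lt_exp hr]
    _ = 1 := by rw [← exp_add, neg_add_cancel, exp_zero]

/-- For all `r > 0`, the derivative of `r ↦ K₀(r) + log r` is strictly positive, i.e.
`K₀'(r) + 1/r > 0`, where `K₀'` is given by the integral representation
`K₀'(r) = −r e^{−r} ∫₀^∞ e^{−rs}(s² + 2s)^{1/2} ds`. -/
theorem besselK0_add_log_deriv_pos (K₀' : ℝ → ℝ)
    (hrep : ∀ r : ℝ, 0 < r →
      K₀' r = -(r * Real.exp (-r) *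
        ∫ s in Set.Ioi (0 : ℝ), Real.exp (-r * s) * Real.sqrt (s ^ 2 + 2 * s)))
    (r : ℝ) (hr : 0 < r) :
    0 < K₀' r + 1 / r := by
  have hK : K₀' r ≥ -(exp (-r) * (1 + r) / r) := by
    calc K₀' r ≥ -(r * exp (-r) * (1 / r ^ 2 + 1 / r)) := by
          rw [hrep r hr]
          gcongr
          exact setIntegral_exp_neg_mul_mul_sqrt_le hr
      _ = -(exp (-r) * (1 + r) / r) := by field_simp
  have h := exp_neg_mul_one_add_lt_one hr.ne'
  calc 0 < (1 - exp (-r) * (1 + r)) / r := div_pos (by linarith) hr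
    _ ≤ K₀' r + 1 / r := by rw [sub_div]; linarith
end
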